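/- arXiv:2103.09373 — 2 statements merged into one kernel-verified Lean document; each statement's English description precedes it below -/
import Mathlib

section
/- Let f : ℝ → ℝ be differentiable and increasing with f'(x) → 0 as x → ∞. If x_y denotes a solution of x + f(x) = y, then as y → ∞, x_y = y − f(y)(1 − o(1)); i.e., (y − x_y)/f(y) → 1. -/
open Filter

/-- Asymptotic-root lemma: if `f` is differentiable and increasing with `f'(x) → 0`
as `x → ∞`, and `x_y` solves `x + f(x) = y`, then `(y - x_y)/f(y) → 1` as `y → ∞`,
i.e. `x_y = y - f(y)(1 - o(1))`. -/
theorem asymptotic_root (f : ℝ → ℝ) (hdiff : Differentiable ℝ f)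
    (hmono : StrictMono f)
    (hderiv : Filter.Tendsto (deriv f) Filter.atTop (nhds 0))
    (x : ℝ → ℝ) (hroot : ∀ y : ℝ, x y + f (x y) = y) :
    Filter.Tendsto (fun y => (y - x y) / f y) Filter.atTop (nhds 1) := by
  -- x y → ∞
  have hxtop : Tendsto x atTop atTop := by
    apply tendsto_atTop.2
    intro b
    filter_upwards [eventually_ge_atTop (b + f b)] with y hy
    by_contra h
    push_neg at h
    have h2 : f (x y) < f b := hmono h
    have := hroot y
    linarith
  -- eventually f (x y) ≠ 0
  have hne : ∀ᶠ y in atTop, f (x y) ≠ 0 := by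
    by_cases h : ∃ y₀, f (x y₀) = 0
    · obtain ⟨y₀, hy₀⟩ := h
      filter_upwards [eventually_gt_atTop y₀] with y hy h0
      have hxx : x y = x y₀ := hmono.injective (h0.trans hy₀.symm)
      have h1 := hroot y
      have h2 := hroot y₀
      rw [hxx] at h1
      have : y = y₀ := by linarith
      exact absurd this hy.ne'
    · push_neg at h
      exact Eventually.of_forall h
  -- main: f y / f (x y) → 1
  have hmain : Tendsto (fun y => f y / f (x y)) atTop (nhds 1) := by
    rw [Metric.tendsto_nhds]
    intro ε hε
    have hε2 : 0 < ε / 2 := by linarith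
    obtain ⟨M, hM⟩ := (Metric.tendsto_nhds.1 hderiv (ε / 2) hε2).exists_forall_of_atTop
    filter_upwards [eventually_ge_atTop M, hxtop.eventually_ge_atTop M, hne] with y hyM hxyM h0
    have hbound : ∀ z ∈ Set.Ici M, ‖deriv f z‖ ≤ ε / 2 := by
      intro z hz
      have := hM z hz
      rw [Real.dist_eq] at this
      simpa [Real.norm_eq_abs] using this.le.trans (by simp)
    have hmvt := Convex.norm_image_sub_le_of_norm_deriv_le (s := Set.Ici M)
      (fun z _ => hdiff z) hbound (convex_Ici M) hxyM hyM
    have hyx : y - x y = f (x y) := by have := hroot y; linarith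
    rw [Real.norm_eq_abs, Real.norm_eq_abs, hyx] at hmvt
    rw [Real.dist_eq]
    have habs : |f y / f (x y) - 1| = |f y - f (x y)| / |f (x y)| := by
      rw [div_sub_one h0, abs_div]
    rw [habs]
    have hpos : 0 < |f (x y)| := abs_pos.2 h0
    rw [div_lt_iff₀ hpos]
    calc |f y - f (x y)| ≤ ε / 2 * |f (x y)| := hmvt
      _ < ε * |f (x y)| := by nlinarith
  have hinv := hmain.inv₀ one_ne_zero
  simp only [inv_div, inv_one] at hinv
  apply hinv.congr
  intro y
  have : y - x y = f (x y) := by have := hroot y; linarith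
  rw [this]
end

section
/- For fixed K ≥ 2 and P > 0, let n₁ < … < n_K and γ satisfy γ + K ln J(P) = n_k C(P) − √(n_k · ln_{(K−k+1)}(n_k) · V(P)) for all k. Then the consecutive gaps satisfy n_{i+1} − n_i = (1/C(P))·(√(n_i ln_{(K−i)}(n_i) V(P)) − √(n_i ln_{(K−i+1)}(n_i) V(P)))·(1 + o(1)) as n_i → ∞; in particular n_k = n₁(1 + o(1)) for every k. -/
open Filter

/-- The `k`-fold nested logarithm: `itlog 0 x = x`, `itlog (k+1) x = ln (itlog k x)`. -/
noncomputable def itlog : ℕ → ℝ → ℝ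
  | 0, x => x
  | k + 1, x => Real.log (itlog k x)

/-- Capacity of the Gaussian channel. -/
noncomputable def gaussC (P : ℝ) : ℝ := (1/2) * Real.log (1 + P)

/-- Dispersion of the Gaussian channel. -/
noncomputable def gaussV (P : ℝ) : ℝ := P * (P + 2) / (2 * (1 + P) ^ 2)

/-- The constant `J(P)` bounding the sphere-vs-Gaussian output density ratio. -/
noncomputable def gaussJ (P : ℝ) : ℝ := 27 * Real.sqrt (Real.pi / 8) * (1 + P) / Real.sqrt (1 + 2 * P)

/-!
Each defining equation reads `n_k C - a_k = const` with `a_k = √(n_k ln_{(K-k+1)}(n_k) V) = o(n_k)`,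
so all the times `n_k` are asymptotically equivalent. Subtracting the equations for `i` and
`i + 1` gives `(n_{i+1} - n_i) C = √(n_{i+1} L(n_{i+1}) V) - √(n_i L'(n_i) V)` with
`L = ln_{(K-i)}` and `L' = ln L`. Iterated logarithms preserve asymptotic equivalence, so the first
root is equivalent to `√(n_i L(n_i) V)`, while the second is negligible against it.
-/

open Asymptotics Topology

lemma tendsto_itlog_atTop (j : ℕ) : Tendsto (itlog j) atTop atTop := by
  induction j with
  | zero => exact tendsto_id
  | succ j ih => exact Real.tendsto_log_atTop.comp ih

lemma isLittleO_itlog_succ (j : ℕ) : itlog (j + 1) =o[atTop] itlog j :=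
  Real.isLittleO_log_id_atTop.comp_tendsto (tendsto_itlog_atTop j)

lemma isLittleO_itlog_succ_id (j : ℕ) : itlog (j + 1) =o[atTop] id := by
  induction j with
  | zero => exact Real.isLittleO_log_id_atTop
  | succ j ih => exact (isLittleO_itlog_succ (j + 1)).trans ih

lemma isLittleO_sqrt_mul_itlog_succ_id (j : ℕ) (c : ℝ) :
    (fun x => √(x * itlog (j + 1) x * c)) =o[atTop] id := by
  have h : (fun x => x * itlog (j + 1) x * c) =o[atTop] fun x => x * x :=
    ((isBigO_refl id atTop).mul_isLittleO ((isLittleO_itlog_succ_id j).const_mul_left c)).congr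
      (fun x => by simp only [id]; ring) fun _ => rfl
  have hsqrt := h.sqrt (Eventually.of_forall fun x => mul_self_nonneg x)
  simp only [Real.sqrt_mul_self_eq_abs] at hsqrt
  exact hsqrt.of_abs_right

lemma isLittleO_sqrt_mul_itlog_succ (j : ℕ) {c : ℝ} (hc : 0 ≤ c) :
    (fun x => √(x * itlog (j + 1) x * c)) =o[atTop] fun x => √(x * itlog j x * c) := by
  have h : (fun x => x * itlog (j + 1) x * c) =o[atTop] fun x => x * itlog j x * c :=
    ((isBigO_refl id atTop).mul_isLittleO (isLittleO_itlog_succ j)).mul_isBigO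
      (isBigO_refl (fun _ => c) atTop)
  refine h.sqrt ?_
  filter_upwards [eventually_ge_atTop 0, (tendsto_itlog_atTop j).eventually_ge_atTop 0]
    with x hx hlog
  positivity

section

variable {α : Type*} {l : Filter α}

protected lemma Asymptotics.IsEquivalent.sqrt {u v : α → ℝ} (h : u ~[l] v) :
    (fun x => √(u x)) ~[l] fun x => √(v x) := by
  obtain ⟨φ, hφ, huφv⟩ := h.exists_eq_mul
  refine isEquivalent_iff_exists_eq_mul.mpr ⟨fun x => √(φ x), by simpa using hφ.sqrt, ?_⟩
  filter_upwards [huφv, hφ.eventually_const_lt zero_lt_one] with x hx hφx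
  simp [hx, Real.sqrt_mul hφx.le]

lemma Asymptotics.IsEquivalent.itlog (j : ℕ) {u v : α → ℝ} (h : u ~[l] v)
    (hv : Tendsto v l atTop) : (fun x => itlog j (u x)) ~[l] fun x => itlog j (v x) := by
  induction j with
  | zero => exact h
  | succ j ih => exact ih.log ((tendsto_itlog_atTop j).comp hv)

lemma isEquivalent_of_mul_sub_eq {x y a b : α → ℝ} {c : ℝ} (hc : c ≠ 0)
    (ha : a =o[l] x) (hb : b =o[l] y) (h : ∀ᶠ t in l, x t * c - a t = y t * c - b t) :
    x ~[l] y := by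
  have hx : (fun t => x t - c⁻¹ * a t) ~[l] x :=
    IsEquivalent.refl.sub_isLittleO (ha.const_mul_left c⁻¹)
  have hy : (fun t => y t - c⁻¹ * b t) ~[l] y :=
    IsEquivalent.refl.sub_isLittleO (hb.const_mul_left c⁻¹)
  refine (hx.symm.congr_right ?_).trans hy
  filter_upwards [h] with t ht
  field_simp
  linear_combination ht

lemma tendsto_div_of_mul_eq_sub {D A B r : α → ℝ} {c : ℝ} (hc : c ≠ 0) (hAB : A ~[l] B)
    (hr : r =o[l] B) (hB : ∀ᶠ t in l, 0 < B t) (h : ∀ᶠ t in l, D t * c = A t - r t) :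
    Tendsto (fun t => D t / ((1 / c) * (B t - r t))) l (𝓝 1) := by
  have hBr : (B - r) ~[l] B := IsEquivalent.refl.sub_isLittleO hr
  have hAr : (A - r) ~[l] (B - r) := (hAB.sub_isLittleO hr).trans hBr.symm
  have hD : D ~[l] fun t => (1 / c) * (B t - r t) := by
    refine (IsEquivalent.refl (u := fun _ => 1 / c)).mul hAr |>.congr_left ?_
    filter_upwards [h] with t ht
    simp only [Pi.mul_apply, Pi.sub_apply, ← ht]
    field_simp
  refine (isEquivalent_iff_tendsto_one ?_).mp hD
  filter_upwards [hBr.eventually_pos hB] with t ht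
  exact mul_ne_zero (one_div_ne_zero hc) ht.ne'

end

lemma gaussC_pos {P : ℝ} (hP : 0 < P) : 0 < gaussC P := by
  unfold gaussC
  have := Real.log_pos (by linarith : (1 : ℝ) < 1 + P)
  positivity

lemma gaussV_pos {P : ℝ} (hP : 0 < P) : 0 < gaussV P := by
  unfold gaussV
  positivity

theorem decoding_time_gaps_general (K : ℕ) (P : ℝ) (hP : 0 < P)
    (n : ℕ → ℕ → ℝ) (γ : ℕ → ℝ)
    (heq : ∀ t, ∀ k, 1 ≤ k → k ≤ K →
      γ t + (K : ℝ) * Real.log (gaussJ P)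
        = n t k * gaussC P - Real.sqrt (n t k * itlog (K - k + 1) (n t k) * gaussV P))
    (htend : ∀ k, 1 ≤ k → k ≤ K → Filter.Tendsto (fun t => n t k) Filter.atTop Filter.atTop) :
    (∀ i, 1 ≤ i → i ≤ K - 1 →
      Filter.Tendsto
        (fun t => (n t (i + 1) - n t i) /
          ((1 / gaussC P) *
            (Real.sqrt (n t i * itlog (K - i) (n t i) * gaussV P)
              - Real.sqrt (n t i * itlog (K - i + 1) (n t i) * gaussV P))))
        Filter.atTop (nhds 1)) ∧
    (∀ k, 1 ≤ k → k ≤ K →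
      Filter.Tendsto (fun t => n t k / n t 1) Filter.atTop (nhds 1)) := by
  have hC := gaussC_pos hP
  have hV := gaussV_pos hP
  have hequiv : ∀ j k, 1 ≤ j → j ≤ K → 1 ≤ k → k ≤ K →
      (fun t => n t j) ~[atTop] fun t => n t k := fun j k hj hjK hk hkK =>
    isEquivalent_of_mul_sub_eq hC.ne'
      ((isLittleO_sqrt_mul_itlog_succ_id (K - j) (gaussV P)).comp_tendsto (htend j hj hjK))
      ((isLittleO_sqrt_mul_itlog_succ_id (K - k) (gaussV P)).comp_tendsto (htend k hk hkK))
      (Eventually.of_forall fun t => (heq t j hj hjK).symm.trans (heq t k hk hkK))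
  refine ⟨fun i hi hiK => ?_, fun k hk hkK => ?_⟩
  · have hni := htend i hi (by omega)
    have hsucc := hequiv (i + 1) i (by omega) (by omega) hi (by omega)
    refine tendsto_div_of_mul_eq_sub hC.ne'
      ((hsucc.mul (hsucc.itlog (K - i) hni)).mul IsEquivalent.refl).sqrt
      ((isLittleO_sqrt_mul_itlog_succ (K - i) hV.le).comp_tendsto hni) ?_
      (Eventually.of_forall fun t => ?_)
    · filter_upwards [hni.eventually_gt_atTop 0,
        ((tendsto_itlog_atTop (K - i)).comp hni).eventually_gt_atTop 0] with t hn hlog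
      simp only [Function.comp_apply] at hlog
      positivity
    · have h := (heq t i hi (by omega)).symm.trans (heq t (i + 1) (by omega) (by omega))
      rw [show K - (i + 1) + 1 = K - i by omega] at h
      linear_combination -h
  · exact (isEquivalent_iff_tendsto_one ((htend 1 le_rfl (by omega)).eventually_ne_atTop 0)).mp
      (hequiv k 1 hk hkK le_rfl (by omega))

/-- Asymptotics of the decoding-time gaps: if for each parameter `t` the times
`n t 1 < … < n t K` and threshold `γ t` satisfy
`γ + K ln J(P) = n_k C(P) - √(n_k ln_{(K-k+1)}(n_k) V(P))` for all `k ∈ [K]`, and all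
times tend to infinity, then
`n_{i+1} - n_i = (1/C(P))(√(n_i ln_{(K-i)}(n_i) V(P)) - √(n_i ln_{(K-i+1)}(n_i) V(P)))(1+o(1))`
and `n_k = n₁ (1 + o(1))`. -/
theorem decoding_time_gaps (K : ℕ) (hK : 2 ≤ K) (P : ℝ) (hP : 0 < P)
    (n : ℕ → ℕ → ℝ) (γ : ℕ → ℝ)
    (hmono : ∀ t, ∀ i j, 1 ≤ i → i < j → j ≤ K → n t i < n t j)
    (heq : ∀ t, ∀ k, 1 ≤ k → k ≤ K →
      γ t + (K : ℝ) * Real.log (gaussJ P)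
        = n t k * gaussC P - Real.sqrt (n t k * itlog (K - k + 1) (n t k) * gaussV P))
    (htend : ∀ k, 1 ≤ k → k ≤ K → Filter.Tendsto (fun t => n t k) Filter.atTop Filter.atTop) :
    (∀ i, 1 ≤ i → i ≤ K - 1 →
      Filter.Tendsto
        (fun t => (n t (i + 1) - n t i) /
          ((1 / gaussC P) *
            (Real.sqrt (n t i * itlog (K - i) (n t i) * gaussV P)
              - Real.sqrt (n t i * itlog (K - i + 1) (n t i) * gaussV P))))
        Filter.atTop (nhds 1)) ∧
    (∀ k, 1 ≤ k → k ≤ K →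
      Filter.Tendsto (fun t => n t k / n t 1) Filter.atTop (nhds 1)) :=
  decoding_time_gaps_general K P hP n γ heq htend
end
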